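/- Fix d ≥ 3. In the polynomial ring ℂ[κ_1,…,κ_d], let K be the 2×(d−1) matrix whose (1,c) entry is κ_c/(c−1)! and whose (2,c) entry is κ_{c+1}/c!, for c = 1,…,d−1. Then the ideal I_2(K) generated by the 2×2 minors of K is prime, and it equals the vanishing ideal of the image of the gamma cumulant parameterization ℂ² → ℂ^d, (k, θ) ↦ ((r−1)!·k·θ^r)_{r=1,…,d}; that is, a polynomial f ∈ ℂ[κ_1,…,κ_d] vanishes at (0!·kθ, 1!·kθ², …, (d−1)!·kθ^d) for all k, θ ∈ ℂ if and only if f ∈ I_2(K). -/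

import Mathlib

open MvPolynomial

/-- The `2 × (d-1)` matrix `K` of the gamma cumulant variety, in `ℂ[κ₁,…,κ_d]`
(variable `i : Fin d` corresponds to `κ_{i+1}`): its `c`-th column, for `1 ≤ c ≤ d-1`,
is `(κ_c/(c-1)!, κ_{c+1}/c!)ᵀ`. -/
noncomputable def gammaCumulantMatrix (d : ℕ) :
    Matrix (Fin 2) (Fin (d - 1)) (MvPolynomial (Fin d) ℂ) :=
  Matrix.of fun r c =>
    ![C (((c.val.factorial : ℂ))⁻¹) * X ⟨c.val, by have := c.isLt; omega⟩,
      C ((((c.val + 1).factorial : ℂ))⁻¹) * X ⟨c.val + 1, by have := c.isLt; omega⟩] r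

/-- The ideal `I₂(K)` generated by all `2 × 2` minors of `K`. -/
noncomputable def gammaCumulantIdeal (d : ℕ) : Ideal (MvPolynomial (Fin d) ℂ) :=
  Ideal.span
    { p | ∃ s : Fin 2 → Fin (d - 1), StrictMono s ∧
        p = ((gammaCumulantMatrix d).submatrix id s).det }

/-!
Writing `κ_{i+1} = i! · y_i`, the matrix `K` becomes the Hankel matrix `(y_{c-1}, y_c)ᵀ` of the
rational normal curve, and the parameterization sends `y_i ↦ k θ^(i+1)`, hence a monomial `y^σ` to
`k^|σ| θ^(|σ| + w σ)`, where `w σ = ∑ i σ_i`. The minors are the exchanges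
`y_a y_b - y_{a-1} y_{b+1}` (`1 ≤ a ≤ b ≤ d-2`); they preserve `|σ|` and `w σ` and strictly increase
`∑ i² σ_i ≤ (d-1) w σ`, so modulo `I₂(K)` every monomial reduces to one with at most one unit of
exponent at the interior indices `1, …, d-2`. Such a normal exponent is determined by `|σ|` and
`w σ = r + (d-1) σ_{d-1}`, `r < d-1` being its interior index, so the normal monomials have
distinct, hence linearly independent, images. Thus `I₂(K)` is the kernel of the parameterization,
which is prime because `ℂ[k, θ]` is a domain, and it is the vanishing ideal of the image because
`ℂ` is infinite.
-/

theorem LinearMap.ker_eq_of_sup_span_eq_top {R M M' ι : Type*} [Ring R] [AddCommGroup M]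
    [AddCommGroup M'] [Module R M] [Module R M'] {f : M →ₗ[R] M'} {p : Submodule R M}
    {v : ι → M} (hp : p ≤ ker f) (hv : LinearIndependent R (f ∘ v))
    (hsup : p ⊔ Submodule.span R (Set.range v) = ⊤) : ker f = p := by
  refine le_antisymm (fun x hx => ?_) hp
  obtain ⟨y, hy, z, hz, rfl⟩ := Submodule.mem_sup.1 (hsup ▸ Submodule.mem_top : x ∈ p ⊔ _)
  have hzker : z ∈ ker f := by
    simpa [mem_ker.1 (hp hy)] using mem_ker.1 hx
  have hz0 : z = 0 := (Submodule.disjoint_def.1 (Submodule.range_ker_disjoint hv)) z hz hzker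
  simpa [hz0] using hy

theorem Finsupp.eq_of_degree_eq_of_forall_ne {ι : Type*} [Fintype ι] {σ τ : ι →₀ ℕ} (i : ι)
    (hdeg : σ.degree = τ.degree) (h : ∀ j ≠ i, σ j = τ j) : σ = τ := by
  classical
  ext j
  by_cases hj : j = i
  · subst hj
    have hsplit (ρ : ι →₀ ℕ) := Finset.add_sum_erase Finset.univ ρ (Finset.mem_univ j)
    rw [Finsupp.degree_eq_sum, Finsupp.degree_eq_sum, ← hsplit σ, ← hsplit τ,
      Finset.sum_congr rfl fun k hk => h k (Finset.ne_of_mem_erase hk)] at hdeg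
    exact Nat.add_right_cancel hdeg
  · exact h j hj

namespace GammaCumulant

variable {d : ℕ}

noncomputable def cumulantParam (d : ℕ) : MvPolynomial (Fin d) ℂ →ₐ[ℂ] MvPolynomial (Fin 2) ℂ :=
  aeval fun i => C (i.val.factorial : ℂ) * X 0 * X 1 ^ (i.val + 1)

theorem eval_cumulantParam (f : MvPolynomial (Fin d) ℂ) (v : Fin 2 → ℂ) :
    eval v (cumulantParam d f) =
      eval (fun i : Fin d => (i.val.factorial : ℂ) * v 0 * v 1 ^ (i.val + 1)) f := by
  rw [cumulantParam, aeval_eq_bind₁]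
  exact (eval₂Hom_bind₁ _ _ _ _).trans (by simp)

theorem cumulantParam_eq_zero_iff (f : MvPolynomial (Fin d) ℂ) :
    cumulantParam d f = 0 ↔
      ∀ k θ : ℂ, eval (fun i : Fin d => (i.val.factorial : ℂ) * k * θ ^ (i.val + 1)) f = 0 := by
  rw [MvPolynomial.funext_iff]
  refine ⟨fun h k θ => ?_, fun h v => ?_⟩
  · simpa [eval_cumulantParam] using h ![k, θ]
  · simpa [eval_cumulantParam] using h (v 0) (v 1)

noncomputable def invFactorialProd (σ : Fin d →₀ ℕ) : ℂ := (∏ i, (i.val.factorial : ℂ) ^ σ i)⁻¹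

noncomputable def scaledMonomial (σ : Fin d →₀ ℕ) : MvPolynomial (Fin d) ℂ :=
  monomial σ (invFactorialProd σ)

theorem invFactorialProd_ne_zero (σ : Fin d →₀ ℕ) : invFactorialProd σ ≠ 0 := by
  simp [invFactorialProd, Finset.prod_ne_zero_iff, Nat.factorial_ne_zero]

theorem scaledMonomial_add (σ τ : Fin d →₀ ℕ) :
    scaledMonomial (σ + τ) = scaledMonomial σ * scaledMonomial τ := by
  simp only [scaledMonomial, invFactorialProd, monomial_mul, Finsupp.add_apply, pow_add,
    Finset.prod_mul_distrib, mul_inv]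

theorem scaledMonomial_single_one (i : Fin d) :
    scaledMonomial (Finsupp.single i 1) = C (i.val.factorial : ℂ)⁻¹ * X i := by
  rw [scaledMonomial, C_mul_X_eq_monomial, invFactorialProd, Finset.prod_eq_single i] <;>
    simp +contextual [eq_comm]

noncomputable def indexWeight : (Fin d →₀ ℕ) →+ ℕ := Finsupp.weight fun i => i.val

noncomputable def paramExponent (σ : Fin d →₀ ℕ) : Fin 2 →₀ ℕ :=
  Finsupp.single 0 σ.degree + Finsupp.single 1 (σ.degree + indexWeight σ)

theorem cumulantParam_scaledMonomial (σ : Fin d →₀ ℕ) :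
    cumulantParam d (scaledMonomial σ) = monomial (paramExponent σ) 1 := by
  have hexp : ∑ i, σ i * (i.val + 1) = σ.degree + indexWeight σ := by
    simp [Finsupp.degree_eq_sum, indexWeight, Finsupp.weight_eq_sum, mul_add,
      Finset.sum_add_distrib, add_comm]
  have hcoeff : invFactorialProd σ * ∏ i, (i.val.factorial : ℂ) ^ σ i = 1 :=
    inv_mul_cancel₀ (by simp [Finset.prod_ne_zero_iff, Nat.factorial_ne_zero])
  rw [scaledMonomial, cumulantParam, aeval_monomial, Finsupp.prod_fintype _ _ (by simp)]
  simp only [mul_pow, Finset.prod_mul_distrib, Finset.prod_pow_eq_pow_sum, ← pow_mul, ← C_pow,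
    ← map_prod, algebraMap_eq, ← mul_assoc, ← C_mul, hcoeff, mul_comm _ (σ _), hexp]
  simp [paramExponent, X_pow_eq_monomial, monomial_mul, Finsupp.degree_eq_sum]

theorem paramExponent_eq_iff {σ τ : Fin d →₀ ℕ} :
    paramExponent σ = paramExponent τ ↔ σ.degree = τ.degree ∧ indexWeight σ = indexWeight τ := by
  refine ⟨fun h => ?_, fun h => by rw [paramExponent, paramExponent, h.1, h.2]⟩
  have h0 := congrArg (· 0) h
  have h1 := congrArg (· 1) h
  simp only [paramExponent, Finsupp.coe_add, Pi.add_apply, Finsupp.single_eq_same, ne_eq,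
    Finsupp.single_eq_of_ne, zero_ne_one, one_ne_zero, not_false_eq_true, add_zero,
    zero_add] at h0 h1
  omega

theorem det_submatrix_gammaCumulantMatrix (s : Fin 2 → Fin (d - 1)) :
    ((gammaCumulantMatrix d).submatrix id s).det =
      scaledMonomial (.single ⟨s 0, by omega⟩ 1 + .single ⟨s 1 + 1, by omega⟩ 1) -
        scaledMonomial (.single ⟨s 0 + 1, by omega⟩ 1 + .single ⟨s 1, by omega⟩ 1) := by
  simp only [Matrix.det_fin_two, Matrix.submatrix_apply, id_eq, gammaCumulantMatrix,
    Matrix.of_apply, Matrix.cons_val_zero, Matrix.cons_val_one, scaledMonomial_add,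
    scaledMonomial_single_one]
  ring

theorem gammaCumulantIdeal_le_ker : gammaCumulantIdeal d ≤ RingHom.ker (cumulantParam d) := by
  rw [gammaCumulantIdeal, Ideal.span_le]
  rintro _ ⟨s, -, rfl⟩
  rw [SetLike.mem_coe, RingHom.mem_ker, det_submatrix_gammaCumulantMatrix, map_sub,
    cumulantParam_scaledMonomial, cumulantParam_scaledMonomial, sub_eq_zero]
  refine congrArg (monomial · 1) (paramExponent_eq_iff.2 ?_)
  simp only [map_add, Finsupp.degree_single, indexWeight, Finsupp.weight_single, smul_eq_mul,
    one_mul, true_and]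
  omega

theorem scaledMonomial_exchange_sub_mem {i j : Fin d} (hi : 0 < i.val) (hij : i ≤ j)
    (hj : j.val + 1 < d) :
    scaledMonomial (Finsupp.single i 1 + Finsupp.single j 1) -
        scaledMonomial (Finsupp.single ⟨i - 1, by omega⟩ 1 + Finsupp.single ⟨j + 1, hj⟩ 1) ∈
      gammaCumulantIdeal d := by
  have hs : StrictMono ![(⟨i - 1, by omega⟩ : Fin (d - 1)), ⟨j, by omega⟩] :=
    strictMono_vecCons.2 ⟨by simp only [Matrix.cons_val_fin_one, Fin.lt_def]; omega,
      Subsingleton.strictMono (α := Fin 1) _⟩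
  have hminor : ((gammaCumulantMatrix d).submatrix id ![⟨i - 1, by omega⟩, ⟨j, by omega⟩]).det ∈
      gammaCumulantIdeal d :=
    Ideal.subset_span ⟨_, hs, rfl⟩
  have hi' : (⟨i - 1 + 1, by omega⟩ : Fin d) = i := Fin.ext (Nat.sub_add_cancel hi)
  rw [det_submatrix_gammaCumulantMatrix] at hminor
  simp only [Matrix.cons_val_zero, Matrix.cons_val_one, hi'] at hminor
  rwa [← neg_mem_iff, neg_sub]

def IsNormal (σ : Fin d →₀ ℕ) : Prop :=
  ∀ i j : Fin d, 0 < i.val → i ≤ j → j.val + 1 < d →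
    ¬ Finsupp.single i 1 + Finsupp.single j 1 ≤ σ

noncomputable def indexSqWeight : (Fin d →₀ ℕ) →+ ℕ := Finsupp.weight fun i => i.val ^ 2

theorem indexSqWeight_le (σ : Fin d →₀ ℕ) : indexSqWeight σ ≤ (d - 1) * indexWeight σ := by
  simp only [indexSqWeight, indexWeight, Finsupp.weight_eq_sum, Finset.mul_sum, smul_eq_mul]
  refine Finset.sum_le_sum fun i _ => ?_
  calc σ i * i.val ^ 2 = i.val * (σ i * i.val) := by ring
    _ ≤ (d - 1) * (σ i * i.val) := Nat.mul_le_mul_right _ (by omega)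

theorem exists_exchange_of_not_isNormal {σ : Fin d →₀ ℕ} (h : ¬ IsNormal σ) :
    ∃ τ : Fin d →₀ ℕ, scaledMonomial σ - scaledMonomial τ ∈ gammaCumulantIdeal d ∧
      τ.degree = σ.degree ∧ indexWeight τ = indexWeight σ ∧ indexSqWeight σ < indexSqWeight τ := by
  simp only [IsNormal, not_forall, not_not] at h
  obtain ⟨i, j, hi, hij, hj, hle⟩ := h
  obtain ⟨ρ, rfl⟩ := exists_add_of_le hle
  refine ⟨Finsupp.single ⟨i - 1, by omega⟩ 1 + Finsupp.single ⟨j + 1, hj⟩ 1 + ρ, ?_, ?_, ?_, ?_⟩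
  · rw [scaledMonomial_add _ ρ, scaledMonomial_add _ ρ, ← sub_mul]
    exact Ideal.mul_mem_right _ _ (scaledMonomial_exchange_sub_mem hi hij hj)
  · simp
  · simp only [indexWeight, map_add, Finsupp.weight_single, smul_eq_mul, one_mul]
    omega
  · simp only [indexSqWeight, map_add, Finsupp.weight_single, smul_eq_mul, one_mul,
      add_lt_add_iff_right]
    zify [show 1 ≤ i.val from hi]
    nlinarith [show i.val ≤ j.val from hij]

theorem exists_isNormal_sub_mem (σ : Fin d →₀ ℕ) :
    ∃ τ : Fin d →₀ ℕ, IsNormal τ ∧ τ.degree = σ.degree ∧ indexWeight τ = indexWeight σ ∧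
      scaledMonomial σ - scaledMonomial τ ∈ gammaCumulantIdeal d := by
  induction hn : (d - 1) * indexWeight σ - indexSqWeight σ using Nat.strong_induction_on
    generalizing σ with
  | _ n ih =>
    by_cases h : IsNormal σ
    · exact ⟨σ, h, rfl, rfl, by simp⟩
    obtain ⟨σ', hmem, hdeg, hwt, hlt⟩ := exists_exchange_of_not_isNormal h
    have hbound := indexSqWeight_le σ'
    obtain ⟨τ, hτ, hdeg', hwt', hmem'⟩ :=
      ih _ (by rw [hwt] at hbound ⊢; omega) σ' rfl
    refine ⟨τ, hτ, hdeg'.trans hdeg, hwt'.trans hwt, ?_⟩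
    simpa using add_mem hmem hmem'

theorem IsNormal.eq_of_ne_zero {σ : Fin d →₀ ℕ} (hσ : IsNormal σ) {i j : Fin d} (hi : 0 < i.val)
    (hj : j.val + 1 < d) (hij : i ≤ j) (hσi : σ i ≠ 0) (hσj : σ j ≠ 0) : i = j ∧ σ i = 1 := by
  by_contra hne
  refine hσ i j hi hij hj fun k => ?_
  simp only [Finsupp.add_apply, Finsupp.single_apply]
  split_ifs <;> subst_vars <;> omega

theorem IsNormal.exists_indexWeight_eq (hd : 2 ≤ d) {σ : Fin d →₀ ℕ} (hσ : IsNormal σ) :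
    ∃ r < d - 1, indexWeight σ = r + (d - 1) * σ ⟨d - 1, by omega⟩ ∧
      ∀ i : Fin d, 0 < i.val → i.val + 1 < d → σ i = if i.val = r then 1 else 0 := by
  have hw : indexWeight σ = ∑ i, σ i * i.val := by simp [indexWeight, Finsupp.weight_eq_sum]
  by_cases h : ∃ i₀ : Fin d, 0 < i₀.val ∧ i₀.val + 1 < d ∧ σ i₀ ≠ 0
  · obtain ⟨i₀, h0, h1, h2⟩ := h
    have hmid : ∀ i : Fin d, 0 < i.val → i.val + 1 < d → σ i ≠ 0 → i = i₀ := fun i hi hi' hσi =>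
      (le_total i i₀).elim (fun hle => (hσ.eq_of_ne_zero hi h1 hle hσi h2).1)
        fun hle => (hσ.eq_of_ne_zero h0 hi' hle h2 hσi).1.symm
    have hσi₀ : σ i₀ = 1 := (hσ.eq_of_ne_zero h0 h1 le_rfl h2 h2).2
    refine ⟨i₀, by omega, ?_, fun i hi hi' => ?_⟩
    · rw [hw, Finset.sum_eq_add_of_mem i₀ ⟨d - 1, by omega⟩ (Finset.mem_univ _) (Finset.mem_univ _)
        (fun h => by simp only [Fin.ext_iff] at h; omega), hσi₀, one_mul, mul_comm]
      rintro c - ⟨hc, hc'⟩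
      rcases Nat.eq_zero_or_pos c.val with hc0 | hc0
      · simp [hc0]
      · have : c.val + 1 < d := by have := c.isLt; simp only [ne_eq, Fin.ext_iff] at hc'; omega
        simp [show σ c = 0 by by_contra hσc; exact hc (hmid c hc0 this hσc)]
    · by_cases hσi : σ i = 0
      · rw [hσi, if_neg fun h => by simp [Fin.ext h, hσi₀] at hσi]
      · rw [hmid i hi hi' hσi, if_pos rfl, hσi₀]
  · push Not at h
    refine ⟨0, by omega, ?_, fun i hi hi' => by simp [h i hi hi', hi.ne']⟩
    rw [hw, Finset.sum_eq_single ⟨d - 1, by omega⟩ _ (by simp), zero_add, mul_comm]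
    rintro c - hc
    rcases Nat.eq_zero_or_pos c.val with hc0 | hc0
    · simp [hc0]
    · have : c.val + 1 < d := by have := c.isLt; simp only [ne_eq, Fin.ext_iff] at hc; omega
      simp [h c hc0 this]

theorem IsNormal.eq_of_degree_eq_of_indexWeight_eq (hd : 2 ≤ d) {σ τ : Fin d →₀ ℕ}
    (hσ : IsNormal σ) (hτ : IsNormal τ) (hdeg : σ.degree = τ.degree)
    (hwt : indexWeight σ = indexWeight τ) : σ = τ := by
  obtain ⟨r, hr, hwσ, hσmid⟩ := hσ.exists_indexWeight_eq hd
  obtain ⟨r', hr', hwτ, hτmid⟩ := hτ.exists_indexWeight_eq hd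
  have hlast : σ ⟨d - 1, by omega⟩ = τ ⟨d - 1, by omega⟩ := by
    have := congrArg (· / (d - 1)) (hwσ.symm.trans (hwt.trans hwτ))
    simpa [Nat.add_mul_div_left _ _ (by omega : 0 < d - 1), Nat.div_eq_of_lt hr,
      Nat.div_eq_of_lt hr'] using this
  have hrr : r = r' := by
    rw [hwσ, hwτ, hlast] at hwt
    omega
  refine Finsupp.eq_of_degree_eq_of_forall_ne ⟨0, by omega⟩ hdeg fun i hi => ?_
  have hi0 : 0 < i.val := Nat.pos_of_ne_zero fun h => hi (Fin.ext h)
  by_cases hil : i.val + 1 < d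
  · rw [hσmid i hi0 hil, hτmid i hi0 hil, hrr]
  · rwa [show i = ⟨d - 1, by omega⟩ from Fin.ext (show i.val = d - 1 by omega)]

theorem sup_span_scaledMonomial_isNormal_eq_top :
    (gammaCumulantIdeal d).restrictScalars ℂ ⊔
      Submodule.span ℂ (Set.range fun σ : {σ : Fin d →₀ ℕ // IsNormal σ} => scaledMonomial σ.1) =
      ⊤ := by
  rw [eq_top_iff, ← (basisMonomials (Fin d) ℂ).span_eq, Submodule.span_le]
  rintro _ ⟨σ, rfl⟩
  obtain ⟨τ, hτ, -, -, hmem⟩ := exists_isNormal_sub_mem σ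
  have hσ : basisMonomials (Fin d) ℂ σ = (invFactorialProd σ)⁻¹ • scaledMonomial σ := by
    simp [scaledMonomial, smul_monomial, invFactorialProd_ne_zero]
  rw [SetLike.mem_coe, hσ, ← sub_add_cancel (scaledMonomial σ) (scaledMonomial τ)]
  exact Submodule.smul_mem _ _ (add_mem (Submodule.mem_sup_left hmem)
    (Submodule.mem_sup_right (Submodule.subset_span ⟨⟨τ, hτ⟩, rfl⟩)))

theorem linearIndependent_cumulantParam_scaledMonomial_isNormal (hd : 2 ≤ d) :
    LinearIndependent ℂ ((cumulantParam d).toLinearMap ∘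
      fun σ : {σ : Fin d →₀ ℕ // IsNormal σ} => scaledMonomial σ.1) := by
  have h : (cumulantParam d).toLinearMap ∘ (fun σ : {σ : Fin d →₀ ℕ // IsNormal σ} =>
      scaledMonomial σ.1) = basisMonomials (Fin 2) ℂ ∘ fun σ => paramExponent σ.1 :=
    funext fun σ => by simp [cumulantParam_scaledMonomial]
  rw [h]
  refine (basisMonomials (Fin 2) ℂ).linearIndependent.comp _ fun σ τ hστ => Subtype.ext ?_
  obtain ⟨hdeg, hwt⟩ := paramExponent_eq_iff.1 hστ
  exact σ.2.eq_of_degree_eq_of_indexWeight_eq hd τ.2 hdeg hwt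

theorem ker_cumulantParam (hd : 2 ≤ d) : RingHom.ker (cumulantParam d) = gammaCumulantIdeal d := by
  have h := LinearMap.ker_eq_of_sup_span_eq_top gammaCumulantIdeal_le_ker
    (linearIndependent_cumulantParam_scaledMonomial_isNormal hd)
    sup_span_scaledMonomial_isNormal_eq_top
  ext f
  exact SetLike.ext_iff.1 h f

end GammaCumulant

/-- `I₂(K)` is prime, and equals the vanishing ideal of the image of the gamma cumulant
parameterization `(k, θ) ↦ ((r-1)!·k·θʳ)_{r=1,…,d}`. -/
theorem gamma_cumulantVariety (d : ℕ) (hd : 3 ≤ d) :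
    (gammaCumulantIdeal d).IsPrime ∧
      ∀ f : MvPolynomial (Fin d) ℂ,
        (∀ k θ : ℂ,
            eval (fun i : Fin d => (i.val.factorial : ℂ) * k * θ ^ (i.val + 1)) f = 0) ↔
          f ∈ gammaCumulantIdeal d := by
  rw [← GammaCumulant.ker_cumulantParam (by omega)]
  exact ⟨RingHom.ker_isPrime _, fun f => (GammaCumulant.cumulantParam_eq_zero_iff f).symm⟩
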